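/- Fix δ ∈ (0,1) and c₀ > 0, and for each integer k ≥ 2 let R = c₀·ln(k/δ)·√k, D = ⌊k/R⌋, and let Ω_R be the Robust Soliton distribution. Then there exist a constant C > 0 and an integer K₀ such that for all k ≥ K₀, the probability that a node stores no information satisfies Ω′(0) = ∑_{d=1}^{k} (1 − d/k)^k·Ω_R(d) ≤ e^{−2} + e^{−1}/k + C·(ln k)²/√k. -/

import Mathlib

/-- The Ideal Soliton distribution on `{1, …, k}`:
`Ω_I(1) = 1/k` and `Ω_I(d) = 1/(d(d−1))` for `d = 2, …, k`. -/
noncomputable def idealSoliton (k d : ℕ) : ℝ :=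
  if d = 1 then 1 / (k : ℝ) else 1 / ((d : ℝ) * ((d : ℝ) - 1))

/-- The function `τ` from the Robust Soliton construction: with `D = ⌊k/R⌋`,
`τ(d) = R/(dk)` for `1 ≤ d ≤ D−1`, `τ(D) = R·ln(R/δ)/k`, and `τ(d) = 0` for `D < d ≤ k`. -/
noncomputable def tauRS (k : ℕ) (R δ : ℝ) (d : ℕ) : ℝ :=
  if d < ⌊(k : ℝ) / R⌋₊ then R / ((d : ℝ) * (k : ℝ))
  else if d = ⌊(k : ℝ) / R⌋₊ then R * Real.log (R / δ) / (k : ℝ)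
  else 0

/-- The normalizing constant `β = ∑_{i=1}^{k} (τ(i) + Ω_I(i))`. -/
noncomputable def betaRS (k : ℕ) (R δ : ℝ) : ℝ :=
  ∑ i ∈ Finset.Icc 1 k, (tauRS k R δ i + idealSoliton k i)

/-- The Robust Soliton distribution `Ω_R(d) = (τ(d) + Ω_I(d))/β`. -/
noncomputable def robustSoliton (k : ℕ) (R δ : ℝ) (d : ℕ) : ℝ :=
  (tauRS k R δ d + idealSoliton k d) / betaRS k R δ

/-! Since `τ ≥ 0` we have `β ≥ 1`, so `Ω′(0) ≤ ∑ (1 - d/k)^k (τ(d) + Ω_I(d))`. On the Ideal Soliton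
part, `(1 - d/k)^k ≤ e^{-d}` gives `e^{-1}/k` from `d = 1` and at most `e^{-2}` from `d ≥ 2`,
whose masses sum to `1 - 1/k`. On the `τ` part drop the factor `(1 - d/k)^k ≤ 1`: then
`∑ τ ≤ (R/k)(H_k + ln(R/δ))`, and for `R = c₀ ln(k/δ) √k` each of `H_k`, `ln(k/δ)`, `ln(R/δ)`
is `O(ln k)` while `R/k = c₀ ln(k/δ)/√k`. -/

open Finset Real Filter

theorem sum_Ioc_one_one_div_mul_sub_one {k : ℕ} (hk : 1 ≤ k) :
    ∑ i ∈ Ioc 1 k, 1 / ((i : ℝ) * ((i : ℝ) - 1)) = 1 - 1 / k := by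
  induction k, hk using Nat.le_induction with
  | base => simp
  | succ n hn ih =>
    rw [sum_Ioc_succ_top (by omega), ih]
    have hn0 : (n : ℝ) ≠ 0 := by positivity
    push_cast
    rw [add_sub_cancel_right]
    field_simp
    ring

theorem idealSoliton_nonneg (k d : ℕ) : 0 ≤ idealSoliton k d := by
  unfold idealSoliton
  split_ifs
  · positivity
  · rcases d with _ | d
    · simp
    · push_cast
      rw [add_sub_cancel_right]
      positivity

theorem sum_Ioc_idealSoliton {k : ℕ} (hk : 1 ≤ k) :
    ∑ d ∈ Ioc 1 k, idealSoliton k d = 1 - 1 / k := by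
  rw [← sum_Ioc_one_one_div_mul_sub_one hk]
  exact sum_congr rfl fun d hd => by rw [idealSoliton, if_neg (mem_Ioc.1 hd).1.ne']

theorem sum_idealSoliton {k : ℕ} (hk : 1 ≤ k) : ∑ d ∈ Icc 1 k, idealSoliton k d = 1 := by
  rw [← add_sum_erase _ _ (left_mem_Icc.2 hk), Icc_erase_left, sum_Ioc_idealSoliton hk,
    idealSoliton, if_pos rfl]
  ring

theorem sum_one_sub_div_pow_mul_idealSoliton_le {k : ℕ} (hk : 1 ≤ k) :
    ∑ d ∈ Icc 1 k, (1 - (d : ℝ) / k) ^ k * idealSoliton k d ≤ exp (-2) + exp (-1) / k := by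
  rw [← add_sum_erase _ _ (left_mem_Icc.2 hk), Icc_erase_left, add_comm]
  gcongr
  · calc ∑ d ∈ Ioc 1 k, (1 - (d : ℝ) / k) ^ k * idealSoliton k d
        ≤ ∑ d ∈ Ioc 1 k, exp (-2) * idealSoliton k d := by
          refine sum_le_sum fun d hd => ?_
          obtain ⟨hd1, hdk⟩ := mem_Ioc.1 hd
          gcongr
          · exact idealSoliton_nonneg k d
          calc (1 - (d : ℝ) / k) ^ k ≤ exp (-d) :=
                one_sub_div_pow_le_exp_neg (by exact_mod_cast hdk)
            _ ≤ exp (-2) := exp_le_exp.2 (by norm_cast; omega)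
      _ = exp (-2) * (1 - 1 / k) := by rw [← mul_sum, sum_Ioc_idealSoliton hk]
      _ ≤ exp (-2) := mul_le_of_le_one_right (exp_pos _).le (sub_le_self _ (by positivity))
  · rw [idealSoliton, if_pos rfl, Nat.cast_one, mul_one_div]
    gcongr
    exact one_sub_div_pow_le_exp_neg (by exact_mod_cast hk)

section RobustSoliton

variable {k : ℕ} {R δ : ℝ}

theorem tauRS_nonneg (hR : 0 ≤ R) (hRδ : 0 ≤ log (R / δ)) (d : ℕ) : 0 ≤ tauRS k R δ d := by
  unfold tauRS
  split_ifs
  · positivity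
  · exact div_nonneg (mul_nonneg hR hRδ) k.cast_nonneg
  · rfl

theorem tauRS_le (hR : 0 ≤ R) (hRδ : 0 ≤ log (R / δ)) (d : ℕ) :
    tauRS k R δ d ≤ R / (d * k) + if d = ⌊(k : ℝ) / R⌋₊ then R * log (R / δ) / k else 0 := by
  have hspike : 0 ≤ R * log (R / δ) / k := div_nonneg (mul_nonneg hR hRδ) k.cast_nonneg
  have hharm : 0 ≤ R / (d * k) := by positivity
  unfold tauRS
  split_ifs <;> first | omega | linarith

theorem sum_tauRS_le (hR : 0 ≤ R) (hRδ : 0 ≤ log (R / δ)) :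
    ∑ d ∈ Icc 1 k, tauRS k R δ d ≤ R / k * (1 + log k + log (R / δ)) := by
  have hharmonic : ∑ d ∈ Icc 1 k, ((d : ℝ))⁻¹ ≤ 1 + log k := by
    simpa [harmonic_eq_sum_Icc] using harmonic_le_one_add_log k
  calc ∑ d ∈ Icc 1 k, tauRS k R δ d
      ≤ ∑ d ∈ Icc 1 k, (R / k * (d : ℝ)⁻¹
          + if d = ⌊(k : ℝ) / R⌋₊ then R * log (R / δ) / k else 0) := by
        refine sum_le_sum fun d _ => (tauRS_le hR hRδ d).trans_eq ?_
        rw [div_mul_eq_div_div_swap, div_eq_mul_inv]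
    _ ≤ R / k * (1 + log k) + R * log (R / δ) / k := by
        rw [sum_add_distrib, ← mul_sum, sum_ite_eq']
        gcongr
        split_ifs
        · rfl
        · exact div_nonneg (mul_nonneg hR hRδ) k.cast_nonneg
    _ = R / k * (1 + log k + log (R / δ)) := by ring

theorem one_le_betaRS (hk : 1 ≤ k) (hR : 0 ≤ R) (hRδ : 0 ≤ log (R / δ)) : 1 ≤ betaRS k R δ := by
  rw [betaRS, sum_add_distrib, sum_idealSoliton hk, le_add_iff_nonneg_left]
  exact sum_nonneg fun d _ => tauRS_nonneg hR hRδ d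

theorem sum_one_sub_div_pow_mul_robustSoliton_le (hk : 1 ≤ k) (hR : 0 ≤ R)
    (hRδ : 0 ≤ log (R / δ)) :
    ∑ d ∈ Icc 1 k, (1 - (d : ℝ) / k) ^ k * robustSoliton k R δ d
      ≤ exp (-2) + exp (-1) / k + R / k * (1 + log k + log (R / δ)) := by
  calc ∑ d ∈ Icc 1 k, (1 - (d : ℝ) / k) ^ k * robustSoliton k R δ d
      ≤ ∑ d ∈ Icc 1 k, (tauRS k R δ d + (1 - (d : ℝ) / k) ^ k * idealSoliton k d) := by
        refine sum_le_sum fun d hd => ?_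
        have hdk : (d : ℝ) ≤ k := by exact_mod_cast (mem_Icc.1 hd).2
        have hbase : 0 ≤ 1 - (d : ℝ) / k := sub_nonneg.2 (div_le_one_of_le₀ hdk k.cast_nonneg)
        have hpow : (1 - (d : ℝ) / k) ^ k ≤ 1 := pow_le_one₀ hbase (sub_le_self _ (by positivity))
        have hτ := tauRS_nonneg (k := k) hR hRδ d
        calc (1 - (d : ℝ) / k) ^ k * robustSoliton k R δ d
            ≤ (1 - (d : ℝ) / k) ^ k * (tauRS k R δ d + idealSoliton k d) := by
              gcongr
              exact div_le_self (add_nonneg hτ (idealSoliton_nonneg k d))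
                (one_le_betaRS hk hR hRδ)
          _ ≤ tauRS k R δ d + (1 - (d : ℝ) / k) ^ k * idealSoliton k d := by
              rw [mul_add]
              gcongr
              exact mul_le_of_le_one_left hτ hpow
    _ ≤ R / k * (1 + log k + log (R / δ)) + (exp (-2) + exp (-1) / k) := by
        rw [sum_add_distrib]
        exact add_le_add (sum_tauRS_le hR hRδ) (sum_one_sub_div_pow_mul_idealSoliton_le hk)
    _ = exp (-2) + exp (-1) / k + R / k * (1 + log k + log (R / δ)) := by ring

end RobustSoliton

section Asymptotics

variable {δ c₀ x : ℝ}

theorem one_le_log_of_three_le (hx : 3 ≤ x) : 1 ≤ log x := by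
  rw [← log_exp 1]
  exact log_le_log (exp_pos 1) ((exp_one_lt_d9.le.trans (by norm_num)).trans hx)

theorem one_le_log_div (hδ : δ ∈ Set.Ioo 0 1) (hx : 3 ≤ x) : 1 ≤ log (x / δ) := by
  rw [log_div (by linarith) hδ.1.ne']
  linarith [one_le_log_of_three_le hx, log_neg hδ.1 hδ.2]

theorem log_div_le_two_mul_log (hδ : 0 < δ) (hx : 1 / δ ≤ x) : log (x / δ) ≤ 2 * log x := by
  have hx0 : 0 < x := (one_div_pos.2 hδ).trans_le hx
  rw [div_eq_mul_one_div, log_mul hx0.ne' (one_div_pos.2 hδ).ne', two_mul]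
  gcongr

theorem log_mul_log_div_mul_sqrt_div_le (hδ : δ ∈ Set.Ioo 0 1) (hc₀ : 0 < c₀) (hx : 3 ≤ x)
    (hxδ : 1 / δ ≤ x) (hxc₀ : c₀ ≤ x) :
    log (c₀ * log (x / δ) * √x / δ) ≤ 5 * log x := by
  have hL := one_le_log_div hδ hx
  have hL₂ := log_div_le_two_mul_log hδ.1 hxδ
  have hlogL : log (log (x / δ)) ≤ log (x / δ) - 1 := log_le_sub_one_of_pos (by linarith)
  have hlogc₀ : log c₀ ≤ log x := log_le_log hc₀ hxc₀
  rw [log_div (by positivity) hδ.1.ne', log_mul (by positivity) (by positivity),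
    log_mul hc₀.ne' (by positivity), log_sqrt (by linarith)]
  linarith [one_le_log_of_three_le hx, log_div (by linarith : x ≠ 0) hδ.1.ne']

theorem mul_log_div_mul_sqrt_div_mul_le (hδ : δ ∈ Set.Ioo 0 1) (hc₀ : 0 < c₀) (hx : 3 ≤ x)
    (hxδ : 1 / δ ≤ x) (hxc₀ : c₀ ≤ x) :
    c₀ * log (x / δ) * √x / x * (1 + log x + log (c₀ * log (x / δ) * √x / δ))
      ≤ 14 * c₀ * log x ^ 2 / √x := by
  have hlog := one_le_log_of_three_le hx
  have hL := one_le_log_div hδ hx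
  have hfactor : 1 + log x + log (c₀ * log (x / δ) * √x / δ) ≤ 7 * log x := by
    linarith [log_mul_log_div_mul_sqrt_div_le hδ hc₀ hx hxδ hxc₀]
  have hcoeff : c₀ * log (x / δ) / √x ≤ c₀ * (2 * log x) / √x := by
    gcongr
    exact log_div_le_two_mul_log hδ.1 hxδ
  calc c₀ * log (x / δ) * √x / x * (1 + log x + log (c₀ * log (x / δ) * √x / δ))
      = c₀ * log (x / δ) / √x * (1 + log x + log (c₀ * log (x / δ) * √x / δ)) := by
        rw [mul_div_assoc, sqrt_div_self', mul_one_div]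
    _ ≤ c₀ * log (x / δ) / √x * (7 * log x) :=
        mul_le_mul_of_nonneg_left hfactor (by have := hc₀.le; positivity)
    _ ≤ c₀ * (2 * log x) / √x * (7 * log x) := by gcongr
    _ = 14 * c₀ * log x ^ 2 / √x := by ring

theorem one_le_mul_log_div_mul_sqrt (hδ : δ ∈ Set.Ioo 0 1) (hc₀ : 0 < c₀) (hx : 3 ≤ x)
    (hxc₀ : c₀⁻¹ ^ 2 ≤ x) : 1 ≤ c₀ * log (x / δ) * √x := by
  have hsqrt : c₀⁻¹ ≤ √x := (le_sqrt' (inv_pos.2 hc₀)).2 hxc₀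
  have hL := one_le_log_div hδ hx
  calc (1 : ℝ) = c₀ * 1 * c₀⁻¹ := by field_simp
    _ ≤ c₀ * log (x / δ) * √x :=
        mul_le_mul (by gcongr) hsqrt (by positivity) (mul_pos hc₀ (by linarith)).le

end Asymptotics

/-- Fix `δ ∈ (0,1)` and `c₀ > 0`, and for each integer `k ≥ 2` let
`R = c₀·ln(k/δ)·√k`, `D = ⌊k/R⌋`, and let `Ω_R` be the Robust Soliton distribution.
Then there exist a constant `C > 0` and an integer `K₀` such that for all `k ≥ K₀`, the
probability that a node stores no information satisfies
`Ω′(0) = ∑_{d=1}^{k} (1 − d/k)^k·Ω_R(d) ≤ e^{−2} + e^{−1}/k + C·(ln k)²/√k`. -/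
theorem robustSoliton_store_nothing_le (δ c₀ : ℝ) (hδ : δ ∈ Set.Ioo (0 : ℝ) 1)
    (hc₀ : 0 < c₀) :
    ∃ C : ℝ, 0 < C ∧ ∃ K₀ : ℕ, 2 ≤ K₀ ∧ ∀ k : ℕ, K₀ ≤ k →
      ∑ d ∈ Finset.Icc 1 k, (1 - (d : ℝ) / (k : ℝ)) ^ k *
          robustSoliton k (c₀ * Real.log ((k : ℝ) / δ) * Real.sqrt (k : ℝ)) δ d
        ≤ Real.exp (-2) + Real.exp (-1) / (k : ℝ)
            + C * (Real.log (k : ℝ)) ^ 2 / Real.sqrt (k : ℝ) := by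
  have hcast := tendsto_natCast_atTop_atTop (R := ℝ)
  have hbound : ∀ᶠ k : ℕ in atTop,
      ∑ d ∈ Icc 1 k, (1 - (d : ℝ) / k) ^ k * robustSoliton k (c₀ * log (k / δ) * √k) δ d
        ≤ exp (-2) + exp (-1) / k + 14 * c₀ * log k ^ 2 / √k := by
    filter_upwards [hcast.eventually_ge_atTop 3, hcast.eventually_ge_atTop (1 / δ),
      hcast.eventually_ge_atTop (c₀⁻¹ ^ 2), hcast.eventually_ge_atTop c₀] with k hk₃ hkδ hkc₀sq hkc₀
    have hk₁ : 1 ≤ k := by exact_mod_cast (by linarith : (1 : ℝ) ≤ k)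
    have hR := one_le_mul_log_div_mul_sqrt hδ hc₀ hk₃ hkc₀sq
    calc _ ≤ _ := sum_one_sub_div_pow_mul_robustSoliton_le hk₁ (by linarith)
          (log_nonneg ((one_le_div hδ.1).2 (hδ.2.le.trans hR)))
      _ ≤ _ := by
          gcongr
          exact mul_log_div_mul_sqrt_div_mul_le hδ hc₀ hk₃ hkδ hkc₀
  obtain ⟨K, hK⟩ := eventually_atTop.1 hbound
  exact ⟨14 * c₀, by positivity, max K 2, le_max_right K 2,
    fun k hkK => hK k (le_of_max_le_left hkK)⟩
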